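/- arXiv:1607.06993 — 7 statements merged into one kernel-verified Lean document; each statement's English description precedes it below -/
import Mathlib

section
/- For fixed p, q in (0,1), the function f(x₁, x₂) = x₁·p + x₂·q − (x₁+x₂)·p^(x₁/(x₁+x₂))·q^(x₂/(x₁+x₂)) defined for x₁, x₂ > 0 is monotonically nondecreasing in x₁ (for each fixed x₂ > 0). -/
/-!
Write `φ t = p ^ t * q ^ (1 - t)`, so the subtracted term is the perspective `(x₁ + x₂) φ (x₁ / (x₁ + x₂))`
of the convex function `φ`. A perspective of a convex function is subadditive (this is Jensen's
inequality with weights proportional to the denominators), so raising `x₁` by `d ≥ 0` raises the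
perspective by at most its value at `(d, d)`, namely `d φ 1 = d p`, which is exactly the increase of
the linear part.
-/

open Set

lemma ConvexOn.perspective_add_le {D : Set ℝ} {φ : ℝ → ℝ} (hφ : ConvexOn ℝ D φ)
    {u s u' s' : ℝ} (hs : 0 < s) (hs' : 0 < s') (hu : u / s ∈ D) (hu' : u' / s' ∈ D) :
    (s + s') * φ ((u + u') / (s + s')) ≤ s * φ (u / s) + s' * φ (u' / s') := by
  have hss' : 0 < s + s' := add_pos hs hs'
  have hsum : s / (s + s') + s' / (s + s') = 1 := by field_simp
  have hmid : s / (s + s') * (u / s) + s' / (s + s') * (u' / s') = (u + u') / (s + s') := by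
    field_simp
  have hjensen := hφ.2 hu hu' (by positivity) (by positivity) hsum
  simp only [smul_eq_mul, hmid] at hjensen
  calc (s + s') * φ ((u + u') / (s + s'))
      ≤ (s + s') * (s / (s + s') * φ (u / s) + s' / (s + s') * φ (u' / s')) :=
        mul_le_mul_of_nonneg_left hjensen hss'.le
    _ = s * φ (u / s) + s' * φ (u' / s') := by field_simp

lemma convexOn_rpow_mul_rpow_one_sub {p q : ℝ} (hp : 0 < p) (hq : 0 < q) :
    ConvexOn ℝ univ (fun t : ℝ => p ^ t * q ^ (1 - t)) := by
  have h : (fun t : ℝ => p ^ t * q ^ (1 - t)) = fun t => q • (p / q) ^ t := by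
    funext t
    rw [smul_eq_mul, Real.div_rpow hp.le hq.le, Real.rpow_sub hq, Real.rpow_one]
    field_simp
  rw [h]
  exact (convexOn_rpow_left (div_pos hp hq)).smul hq.le

theorem stmt_0 (p q : ℝ) (hp : p ∈ Set.Ioo (0:ℝ) 1) (hq : q ∈ Set.Ioo (0:ℝ) 1)
    (x₂ : ℝ) (hx₂ : 0 < x₂) (x₁ x₁' : ℝ) (hx₁ : 0 < x₁) (h : x₁ ≤ x₁') :
    x₁ * p + x₂ * q - (x₁ + x₂) * p ^ (x₁ / (x₁ + x₂)) * q ^ (x₂ / (x₁ + x₂))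
      ≤ x₁' * p + x₂ * q - (x₁' + x₂) * p ^ (x₁' / (x₁' + x₂)) * q ^ (x₂ / (x₁' + x₂)) := by
  rcases h.eq_or_lt with rfl | hlt
  · rfl
  set φ : ℝ → ℝ := fun t => p ^ t * q ^ (1 - t)
  have hpersp : ∀ x, 0 < x → (x + x₂) * p ^ (x / (x + x₂)) * q ^ (x₂ / (x + x₂))
      = (x + x₂) * φ (x / (x + x₂)) := fun x hx => by
    have : 1 - x / (x + x₂) = x₂ / (x + x₂) := by field_simp; ring
    simp only [φ, this, mul_assoc]
  have hd : 0 < x₁' - x₁ := sub_pos.mpr hlt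
  have hsub : (x₁' + x₂) * φ (x₁' / (x₁' + x₂))
      ≤ (x₁ + x₂) * φ (x₁ / (x₁ + x₂)) + (x₁' - x₁) * φ ((x₁' - x₁) / (x₁' - x₁)) := by
    have := (convexOn_rpow_mul_rpow_one_sub hp.1 hq.1).perspective_add_le
      (add_pos hx₁ hx₂) hd (mem_univ (x₁ / (x₁ + x₂))) (mem_univ ((x₁' - x₁) / (x₁' - x₁)))
    rwa [add_sub_cancel, show x₁ + x₂ + (x₁' - x₁) = x₁' + x₂ by ring] at this
  have hφ1 : φ ((x₁' - x₁) / (x₁' - x₁)) = p := by simp [φ, div_self hd.ne']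
  rw [hφ1] at hsub
  rw [hpersp x₁ hx₁, hpersp x₁' (hx₁.trans hlt)]
  linarith
end

section
/- For any 0 < q < p < 1 and any t ∈ (0, 1/2], J_t(p,q) ≤ J_{1−t}(p,q), where J_t(p,q) = 2(t·p + (1−t)·q − p^t·q^{1−t}). -/
noncomputable def J (t p q : ℝ) : ℝ := 2 * (t * p + (1 - t) * q - p ^ t * q ^ (1 - t))

lemma convexOn_sinh_Ici : ConvexOn ℝ (Set.Ici (0:ℝ)) Real.sinh := by
  apply convexOn_of_deriv2_nonneg (convex_Ici 0)
  · exact Real.continuous_sinh.continuousOn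
  · exact Real.differentiable_sinh.differentiableOn
  · rw [Real.deriv_sinh]; exact Real.differentiable_cosh.differentiableOn
  · intro x hx
    rw [interior_Ici, Set.mem_Ioi] at hx
    simp only [Function.iterate_succ, Function.iterate_zero, Function.comp_apply, id_eq]
    rw [Real.deriv_sinh, Real.deriv_cosh]
    exact Real.sinh_nonneg_iff.mpr hx.le

lemma sinh_smul_le (s d : ℝ) (hs0 : 0 ≤ s) (hs1 : s ≤ 1) (hd : 0 ≤ d) :
    Real.sinh (s * d) ≤ s * Real.sinh d := by
  have h := convexOn_sinh_Ici.2 (Set.mem_Ici.mpr hd) (Set.mem_Ici.mpr le_rfl)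
    hs0 (by linarith : (0:ℝ) ≤ 1 - s) (by ring)
  simpa using h

theorem stmt_1 (p q t : ℝ) (hq : 0 < q) (hqp : q < p) (hp : p < 1)
    (ht : t ∈ Set.Ioc (0:ℝ) (1/2)) :
    J t p q ≤ J (1 - t) p q := by
  obtain ⟨ht0, ht1⟩ := ht
  have hp0 : 0 < p := hq.trans hqp
  set a := Real.log p with ha
  set b := Real.log q with hb
  have hab : b < a := Real.log_lt_log hq hqp
  set m := (a + b) / 2 with hm
  set d := (a - b) / 2 with hd
  have hd0 : 0 ≤ d := by rw [hd]; linarith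
  set s := 1 - 2 * t with hs
  have hs0 : 0 ≤ s := by rw [hs]; linarith
  have hs1 : s ≤ 1 := by rw [hs]; linarith
  have key : Real.sinh (s * d) ≤ s * Real.sinh d := sinh_smul_le s d hs0 hs1 hd0
  rw [Real.sinh_eq, Real.sinh_eq] at key
  have hpt : ∀ u : ℝ, p ^ u = Real.exp (u * a) := fun u => by
    rw [Real.rpow_def_of_pos hp0, mul_comm]
  have hqt : ∀ u : ℝ, q ^ u = Real.exp (u * b) := fun u => by
    rw [Real.rpow_def_of_pos hq, mul_comm]
  have hep : p = Real.exp a := (Real.exp_log hp0).symm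
  have heq : q = Real.exp b := (Real.exp_log hq).symm
  have e1 : p ^ t * q ^ (1 - t) = Real.exp m * Real.exp (-(s * d)) := by
    rw [hpt, hqt, ← Real.exp_add, ← Real.exp_add]
    congr 1
    rw [hm, hd, hs]; ring
  have e2 : p ^ (1 - t) * q ^ (1 - (1 - t)) = Real.exp m * Real.exp (s * d) := by
    rw [hpt, hqt, ← Real.exp_add, ← Real.exp_add]
    congr 1
    rw [hm, hd, hs]; ring
  have e3 : p - q = Real.exp m * (Real.exp d - Real.exp (-d)) := by
    rw [hep, heq, mul_sub, ← Real.exp_add, ← Real.exp_add]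
    congr 2 <;> (rw [hm, hd]; ring)
  have hexpm : 0 < Real.exp m := Real.exp_pos m
  -- goal: J t p q ≤ J (1-t) p q
  unfold J
  rw [e1, e2]
  have key2 : Real.exp m * Real.exp (s * d) - Real.exp m * Real.exp (-(s * d))
      ≤ s * (p - q) := by
    rw [e3]
    have := mul_le_mul_of_nonneg_left key hexpm.le
    calc Real.exp m * Real.exp (s * d) - Real.exp m * Real.exp (-(s * d))
        = Real.exp m * ((Real.exp (s * d) - Real.exp (-(s * d))) / 2) * 2 := by ring
      _ ≤ Real.exp m * (s * ((Real.exp d - Real.exp (-d)) / 2)) * 2 := by linarith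
      _ = s * (Real.exp m * (Real.exp d - Real.exp (-d))) := by ring
  rw [hs] at key2
  nlinarith [key2]
end

section
/- For any 0 < q < p < 1 and reals 0 < x₁ ≤ x₂: 2·x₁·J_{1/2}(p,q) ≤ (x₁+x₂)·J_{x₁/(x₁+x₂)}(p,q) ≤ (x₁+x₂)·J_{1/2}(p,q). -/
theorem stmt_4 (p q : ℝ) (hq : 0 < q) (hqp : q < p) (hp : p < 1)
    (x₁ x₂ : ℝ) (hx₁ : 0 < x₁) (hx : x₁ ≤ x₂) :
    2 * x₁ * J (1/2) p q ≤ (x₁ + x₂) * J (x₁ / (x₁ + x₂)) p q ∧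
    (x₁ + x₂) * J (x₁ / (x₁ + x₂)) p q ≤ (x₁ + x₂) * J (1/2) p q := by
  have hp0 : 0 < p := hq.trans hqp
  have hs : 0 < x₁ + x₂ := by linarith
  set t := x₁ / (x₁ + x₂) with ht
  have ht0 : 0 < t := div_pos hx₁ hs
  have ht2 : t ≤ 1 / 2 := by
    rw [ht, div_le_iff₀ hs]; linarith
  have hx1 : x₁ = t * (x₁ + x₂) := by
    rw [ht]; field_simp
  set L := Real.log (p / q) with hL
  have hr1 : (1 : ℝ) < p / q := (one_lt_div hq).2 hqp
  have hL0 : 0 < L := Real.log_pos hr1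
  have hexpL : Real.exp L = p / q := Real.exp_log (by positivity)
  have hpow : ∀ u : ℝ, p ^ u * q ^ (1 - u) = q * Real.exp (u * L) := by
    intro u
    rw [Real.rpow_def_of_pos hp0, Real.rpow_def_of_pos hq, ← Real.exp_add]
    conv_rhs => rw [← Real.exp_log hq, ← Real.exp_add]
    congr 1
    rw [hL, Real.log_div hp0.ne' hq.ne']
    ring
  set A := Real.exp ((1 / 2 : ℝ) * L) with hA
  set E := Real.exp (t * L) with hE
  have hA0 : 0 < A := Real.exp_pos _
  have hE0 : 0 < E := Real.exp_pos _
  set B := Real.exp (-((1 / 2 : ℝ) * L)) with hB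
  have hAB : A * B = 1 := by
    rw [hA, hB, ← Real.exp_add]; simp
  have hAA : A * A = p / q := by
    rw [hA, ← Real.exp_add, ← hexpL]; ring_nf
  -- key inequality: q * (L * A) ≤ p - q
  have hsinh : (1 / 2 : ℝ) * L < Real.sinh ((1 / 2 : ℝ) * L) :=
    Real.self_lt_sinh_iff.2 (by positivity)
  have hsinh' : (1 / 2 : ℝ) * L < (A - B) / 2 := by
    rwa [Real.sinh_eq] at hsinh
  have hkey : q * (L * A) ≤ p - q := by
    have h1 : L * A < A * A - A * B := by nlinarith
    have h2 : q * (L * A) ≤ q * (A * A - A * B) := by nlinarith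
    rw [hAA, hAB] at h2
    have : q * (p / q - 1) = p - q := by field_simp
    linarith [h2.trans_eq this]
  -- convexity bound: E ≤ (1 - 2t) + 2t * A
  have hE1 : E ≤ (1 - 2 * t) + 2 * t * A := by
    have hc := convexOn_exp.2 (Set.mem_univ (0 : ℝ)) (Set.mem_univ ((1 / 2 : ℝ) * L))
      (by linarith : (0 : ℝ) ≤ 1 - 2 * t) (by linarith : (0 : ℝ) ≤ 2 * t) (by ring)
    simp only [smul_eq_mul, Real.exp_zero, mul_zero, zero_add] at hc
    have harg : (2 * t) * ((1 / 2 : ℝ) * L) = t * L := by ring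
    rw [harg] at hc
    rw [hE]; linarith
  -- tangent bound: A - E ≤ (1/2 - t) * (L * A)
  have hE2 : A - E ≤ (1 / 2 - t) * (L * A) := by
    have h1 : t * L - (1 / 2) * L + 1 ≤ Real.exp (t * L - (1 / 2) * L) :=
      Real.add_one_le_exp _
    have h2 : E = A * Real.exp (t * L - (1 / 2) * L) := by
      rw [hE, hA, ← Real.exp_add]; ring_nf
    nlinarith [mul_le_mul_of_nonneg_left h1 hA0.le]
  have hJt : J t p q = 2 * (t * p + (1 - t) * q - q * E) := by
    simp only [J]; rw [hpow t]
  have hJh : J (1 / 2) p q = 2 * ((1 / 2) * p + (1 - 1 / 2) * q - q * A) := by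
    simp only [J]; rw [hpow (1 / 2)]
  constructor
  · rw [hJt, hJh]
    have key1 : 2 * t * ((1 / 2) * p + (1 - 1 / 2) * q - q * A)
        ≤ t * p + (1 - t) * q - q * E := by
      have := mul_le_mul_of_nonneg_left hE1 hq.le
      linarith
    have h := mul_le_mul_of_nonneg_left key1 hs.le
    have hts : t * (x₁ + x₂) = x₁ := by rw [ht]; field_simp
    calc 2 * x₁ * (2 * ((1 / 2) * p + (1 - 1 / 2) * q - q * A))
        = (x₁ + x₂) * (2 * (2 * t * ((1 / 2) * p + (1 - 1 / 2) * q - q * A))) := by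
          linear_combination (-(4 * ((1 / 2) * p + (1 - 1 / 2) * q - q * A))) * hts
      _ ≤ (x₁ + x₂) * (2 * (t * p + (1 - t) * q - q * E)) := by linarith
  · rw [hJt, hJh]
    have h4 : q * (A - E) ≤ q * ((1 / 2 - t) * (L * A)) :=
      mul_le_mul_of_nonneg_left hE2 hq.le
    have h5 : (1 / 2 - t) * (q * (L * A)) ≤ (1 / 2 - t) * (p - q) :=
      mul_le_mul_of_nonneg_left hkey (by linarith)
    have key2 : t * p + (1 - t) * q - q * E ≤ (1 / 2) * p + (1 - 1 / 2) * q - q * A := by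
      linarith [h4, h5]
    have := mul_le_mul_of_nonneg_left key2 hs.le
    linarith
end

section
/- For any p, q, t ∈ (0,1), it holds that 2·min(t, 1−t)·(√p − √q)² ≤ J_t(p,q) ≤ 2·(√p − √q)². -/
theorem stmt_5 (p q t : ℝ) (hp : p ∈ Set.Ioo (0:ℝ) 1) (hq : q ∈ Set.Ioo (0:ℝ) 1)
    (ht : t ∈ Set.Ioo (0:ℝ) 1) :
    2 * min t (1 - t) * (Real.sqrt p - Real.sqrt q) ^ 2 ≤ J t p q ∧
    J t p q ≤ 2 * (Real.sqrt p - Real.sqrt q) ^ 2 := by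
  obtain ⟨hp0, hp1⟩ := hp
  obtain ⟨hq0, hq1⟩ := hq
  obtain ⟨ht0, ht1⟩ := ht
  have hpq0 : (0:ℝ) < p * q := mul_pos hp0 hq0
  unfold J
  set s := Real.sqrt (p * q) with hs
  have hs0 : 0 ≤ s := Real.sqrt_nonneg _
  have hsmul : s = Real.sqrt p * Real.sqrt q := Real.sqrt_mul hp0.le q
  have hsp : Real.sqrt p ^ 2 = p := Real.sq_sqrt hp0.le
  have hsq : Real.sqrt q ^ 2 = q := Real.sq_sqrt hq0.le
  -- s ^ (2*c) = p^c * q^c for real c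
  have hs_rpow : ∀ c : ℝ, s ^ (2 * c) = p ^ c * q ^ c := by
    intro c
    rw [hs, Real.sqrt_eq_rpow, ← Real.rpow_mul hpq0.le,
      show (1:ℝ)/2 * (2*c) = c by ring, Real.mul_rpow hp0.le hq0.le]
  set a := p ^ t * q ^ (1 - t) with ha
  set b := p ^ (1 - t) * q ^ t with hb
  have ha0 : 0 ≤ a := mul_nonneg (Real.rpow_nonneg hp0.le _) (Real.rpow_nonneg hq0.le _)
  have hb0 : 0 ≤ b := mul_nonneg (Real.rpow_nonneg hp0.le _) (Real.rpow_nonneg hq0.le _)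
  have hab : a * b = p * q := by
    rw [ha, hb]
    rw [show p ^ t * q ^ (1-t) * (p ^ (1-t) * q ^ t) = (p ^ t * p ^ (1-t)) * (q ^ (1-t) * q ^ t) by ring,
      ← Real.rpow_add hp0, ← Real.rpow_add hq0,
      show t + (1-t) = (1:ℝ) by ring, show (1-t) + t = (1:ℝ) by ring,
      Real.rpow_one, Real.rpow_one]
  constructor
  · -- lower bound
    rcases le_total t (1 - t) with hmin | hmin
    · rw [min_eq_left hmin]
      -- key: a ≤ 2t*s + (1-2t)*q
      have key : a ≤ 2 * t * s + (1 - 2 * t) * q := by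
        have hgm := Real.geom_mean_le_arith_mean2_weighted
          (by positivity : (0:ℝ) ≤ 2 * t) (by linarith : (0:ℝ) ≤ 1 - 2 * t)
          hs0 hq0.le (by ring)
        have heq : s ^ (2 * t) * q ^ (1 - 2 * t) = a := by
          rw [hs_rpow t, ha, mul_assoc, ← Real.rpow_add hq0,
            show t + (1 - 2*t) = 1 - t by ring]
        linarith [heq ▸ hgm]
      nlinarith [hsmul, hsp, hsq]
    · rw [min_eq_right hmin]
      have key : a ≤ 2 * (1 - t) * s + (2 * t - 1) * p := by
        have hgm := Real.geom_mean_le_arith_mean2_weighted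
          (by linarith : (0:ℝ) ≤ 2 * (1 - t)) (by linarith : (0:ℝ) ≤ 2 * t - 1)
          hs0 hp0.le (by ring)
        have heq : s ^ (2 * (1 - t)) * p ^ (2 * t - 1) = a := by
          rw [hs_rpow (1 - t), ha,
            show p ^ (1-t) * q ^ (1-t) * p ^ (2*t-1) = (p ^ (1-t) * p ^ (2*t-1)) * q ^ (1-t) by ring,
            ← Real.rpow_add hp0, show (1-t) + (2*t-1) = t by ring]
        linarith [heq ▸ hgm]
      nlinarith [hsmul, hsp, hsq]
  · -- upper bound
    have hbgm : b ≤ (1 - t) * p + t * q := by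
      have := Real.geom_mean_le_arith_mean2_weighted
        (by linarith : (0:ℝ) ≤ 1 - t) ht0.le hp0.le hq0.le (by ring)
      linarith
    have h2s : 2 * s ≤ a + b := by
      have hsa : Real.sqrt a ^ 2 = a := Real.sq_sqrt ha0
      have hsb : Real.sqrt b ^ 2 = b := Real.sq_sqrt hb0
      have : s = Real.sqrt a * Real.sqrt b := by
        rw [hs, ← hab, Real.sqrt_mul ha0]
      nlinarith [sq_nonneg (Real.sqrt a - Real.sqrt b)]
    nlinarith [hsmul, hsp, hsq]
end

section
/- Let θ₀ > 0 and θ₁,…,θ_{2m} > 0 with Σ_{i=1}^{m} θᵢ = Σ_{i=m+1}^{2m} θᵢ = m, and let 0 ≤ q < p ≤ 1 with θ₀θᵢp ≤ 1 for all i. Let X₁,…,X_{2m} be independent with Xᵢ ~ Bern(θ₀θᵢp) for i ≤ m and Xᵢ ~ Bern(θ₀θᵢq) for i > m. Then P(Σ_{i=1}^{m} Xᵢ < Σ_{i=m+1}^{2m} Xᵢ) ≤ exp(−θ₀ m (√p − √q)²). -/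
/-!
Chernoff's method. For a `{0,1}`-valued `X` with `P(X = 1) = π`, `E[e^{aX}] = 1 + (e^a - 1)π
≤ exp((e^a - 1)π)`. Weighting the first block by `-t` and the second by `t ≥ 0`, independence gives
`P(S₁ < S₂) ≤ exp((e^{-t} - 1)λ + (e^t - 1)κ)`, where `λ = θ₀ m p` and `κ = θ₀ m q` are the
expected block sums (this is where the normalisation of the weights enters). The choice
`e^t = √(λ/κ)` turns the exponent into `-(√λ - √κ)²`. When `q = 0` the second block vanishes
almost surely and the event is null.
-/

open MeasureTheory ProbabilityTheory Finset Real

lemma exp_mul_eq_of_zero_or_one {x : ℝ} (hx : x = 0 ∨ x = 1) (t : ℝ) :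
    exp (t * x) = 1 + (exp t - 1) * x := by
  rcases hx with rfl | rfl <;> simp

lemma eq_indicator_one_of_zero_or_one {Ω : Type*} {X : Ω → ℝ} (h01 : ∀ ω, X ω = 0 ∨ X ω = 1) :
    X = {ω | X ω = 1}.indicator 1 := by
  ext ω
  rcases h01 ω with h | h <;> simp [h]

section ZeroOne

variable {Ω : Type*} [MeasurableSpace Ω] {μ : Measure Ω} {X : Ω → ℝ}

lemma integrable_of_zero_or_one [IsFiniteMeasure μ] (hX : Measurable X)
    (h01 : ∀ ω, X ω = 0 ∨ X ω = 1) : Integrable X μ := by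
  rw [eq_indicator_one_of_zero_or_one h01]
  exact (integrable_const 1).indicator (hX (measurableSet_singleton 1))

lemma integral_eq_measureReal_of_zero_or_one (hX : Measurable X)
    (h01 : ∀ ω, X ω = 0 ∨ X ω = 1) : ∫ ω, X ω ∂μ = μ.real {ω | X ω = 1} := by
  conv_lhs => rw [eq_indicator_one_of_zero_or_one h01]
  exact integral_indicator_one (hX (measurableSet_singleton 1))

lemma integrable_exp_mul_of_zero_or_one [IsFiniteMeasure μ] (hX : Measurable X)
    (h01 : ∀ ω, X ω = 0 ∨ X ω = 1) (t : ℝ) :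
    Integrable (fun ω ↦ exp (t * X ω)) μ := by
  simp_rw [exp_mul_eq_of_zero_or_one (h01 _) t]
  exact (integrable_const 1).add ((integrable_of_zero_or_one hX h01).const_mul _)

lemma mgf_eq_of_zero_or_one [IsProbabilityMeasure μ] (hX : Measurable X)
    (h01 : ∀ ω, X ω = 0 ∨ X ω = 1) (t : ℝ) :
    mgf X μ t = 1 + (exp t - 1) * μ.real {ω | X ω = 1} := by
  rw [mgf]
  simp_rw [exp_mul_eq_of_zero_or_one (h01 _) t]
  rw [integral_add (integrable_const 1) ((integrable_of_zero_or_one hX h01).const_mul _),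
    integral_const_mul, integral_eq_measureReal_of_zero_or_one hX h01]
  simp

lemma mgf_le_exp_of_zero_or_one [IsProbabilityMeasure μ] (hX : Measurable X)
    (h01 : ∀ ω, X ω = 0 ∨ X ω = 1) (t : ℝ) :
    mgf X μ t ≤ exp ((exp t - 1) * μ.real {ω | X ω = 1}) := by
  rw [mgf_eq_of_zero_or_one hX h01]
  linarith [add_one_le_exp ((exp t - 1) * μ.real {ω | X ω = 1})]

end ZeroOne

section IndependentZeroOne

variable {Ω ι : Type*} [MeasurableSpace Ω] {μ : Measure Ω} {X : ι → Ω → ℝ}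

lemma measureReal_sum_mul_nonneg_le_exp [IsProbabilityMeasure μ] (hX : ∀ i, Measurable (X i))
    (h01 : ∀ i ω, X i ω = 0 ∨ X i ω = 1) (hindep : iIndepFun X μ) (s : Finset ι) (a : ι → ℝ) :
    μ.real {ω | 0 ≤ ∑ i ∈ s, a i * X i ω}
      ≤ exp (∑ i ∈ s, (exp (a i) - 1) * μ.real {ω | X i ω = 1}) := by
  set Y : ι → Ω → ℝ := fun i ω ↦ a i * X i ω
  have hYmeas : ∀ i, Measurable (Y i) := fun i ↦ (hX i).const_mul _
  have hYindep : iIndepFun Y μ := hindep.comp _ fun i ↦ measurable_const_mul (a i)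
  have hint : Integrable (fun ω ↦ exp (1 * (∑ i ∈ s, Y i) ω)) μ :=
    hYindep.integrable_exp_mul_sum hYmeas fun i _ ↦ by
      simpa only [Y, ← mul_assoc] using integrable_exp_mul_of_zero_or_one (hX i) (h01 i) _
  calc μ.real {ω | 0 ≤ ∑ i ∈ s, a i * X i ω}
      = μ.real {ω | 0 ≤ (∑ i ∈ s, Y i) ω} := by simp only [Y, Finset.sum_apply]
    _ ≤ exp (-1 * 0) * mgf (∑ i ∈ s, Y i) μ 1 := measure_ge_le_exp_mul_mgf 0 zero_le_one hint
    _ = ∏ i ∈ s, mgf (X i) μ (a i) := by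
      simp only [mul_zero, exp_zero, one_mul, hYindep.mgf_sum hYmeas, Y, mgf_const_mul, mul_one]
    _ ≤ ∏ i ∈ s, exp ((exp (a i) - 1) * μ.real {ω | X i ω = 1}) :=
      prod_le_prod (fun _ _ ↦ mgf_nonneg) fun i _ ↦ mgf_le_exp_of_zero_or_one (hX i) (h01 i) _
    _ = _ := (exp_sum _ _).symm

lemma measureReal_sum_lt_sum_le_exp [IsProbabilityMeasure μ] (hX : ∀ i, Measurable (X i))
    (h01 : ∀ i ω, X i ω = 0 ∨ X i ω = 1) (hindep : iIndepFun X μ) {s u : Finset ι}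
    (hsu : Disjoint s u) {t : ℝ} (ht : 0 ≤ t) :
    μ.real {ω | ∑ i ∈ s, X i ω < ∑ i ∈ u, X i ω}
      ≤ exp ((exp (-t) - 1) * ∑ i ∈ s, μ.real {ω | X i ω = 1}
          + (exp t - 1) * ∑ i ∈ u, μ.real {ω | X i ω = 1}) := by
  classical
  set a : ι → ℝ := fun i ↦ if i ∈ s then -t else t
  have ha_s : ∀ i ∈ s, a i = -t := fun i hi ↦ if_pos hi
  have ha_u : ∀ i ∈ u, a i = t := fun i hi ↦ if_neg (disjoint_right.mp hsu hi)
  have hsplit : ∀ g : ℝ → ι → ℝ,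
      ∑ i ∈ s ∪ u, g (a i) i = ∑ i ∈ s, g (-t) i + ∑ i ∈ u, g t i := fun g ↦ by
    rw [sum_union hsu]
    congr 1 <;> refine sum_congr rfl fun i hi ↦ ?_
    · rw [ha_s i hi]
    · rw [ha_u i hi]
  calc μ.real {ω | ∑ i ∈ s, X i ω < ∑ i ∈ u, X i ω}
      ≤ μ.real {ω | 0 ≤ ∑ i ∈ s ∪ u, a i * X i ω} := by
        refine measureReal_mono fun ω hω ↦ ?_
        have hlt : ∑ i ∈ s, X i ω < ∑ i ∈ u, X i ω := hω
        change 0 ≤ ∑ i ∈ s ∪ u, a i * X i ω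
        rw [hsplit fun c i ↦ c * X i ω, ← mul_sum, ← mul_sum]
        nlinarith
    _ ≤ _ := measureReal_sum_mul_nonneg_le_exp hX h01 hindep _ a
    _ = _ := by
      rw [hsplit fun c i ↦ (exp c - 1) * μ.real {ω | X i ω = 1}, ← mul_sum, ← mul_sum]

lemma measure_sum_lt_sum_eq_zero (h01 : ∀ i ω, X i ω = 0 ∨ X i ω = 1) {s u : Finset ι}
    (hu : ∀ i ∈ u, μ {ω | X i ω = 1} = 0) :
    μ {ω | ∑ i ∈ s, X i ω < ∑ i ∈ u, X i ω} = 0 := by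
  have hzero : ∀ᵐ ω ∂μ, ∀ i ∈ u, X i ω = 0 := by
    refine (Filter.eventually_all_finset u).2 fun i hi ↦ ae_iff.2 ?_
    exact measure_mono_null (fun ω hω ↦ (h01 i ω).resolve_left hω) (hu i hi)
  rw [measure_eq_zero_iff_ae_notMem]
  filter_upwards [hzero] with ω hω
  simp only [sum_eq_zero hω, not_lt]
  exact sum_nonneg fun i _ ↦ by rcases h01 i ω with h | h <;> simp [h]

lemma measureReal_sum_lt_sum_le_exp_neg_sq [IsProbabilityMeasure μ]
    (hX : ∀ i, Measurable (X i)) (h01 : ∀ i ω, X i ω = 0 ∨ X i ω = 1) (hindep : iIndepFun X μ)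
    {s u : Finset ι} (hsu : Disjoint s u) {a b : ℝ} (hb : 0 ≤ b) (hba : b ≤ a)
    (hs : ∑ i ∈ s, μ.real {ω | X i ω = 1} = a ^ 2) (hu : ∑ i ∈ u, μ.real {ω | X i ω = 1} = b ^ 2) :
    μ.real {ω | ∑ i ∈ s, X i ω < ∑ i ∈ u, X i ω} ≤ exp (-(a - b) ^ 2) := by
  rcases hb.eq_or_lt with rfl | hb0
  · have hu0 : ∀ i ∈ u, μ {ω | X i ω = 1} = 0 := fun i hi ↦ (measureReal_eq_zero_iff).1 <|
      (sum_eq_zero_iff_of_nonneg fun _ _ ↦ measureReal_nonneg).1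
        (hu.trans (zero_pow two_ne_zero)) i hi
    rw [measureReal_def, measure_sum_lt_sum_eq_zero h01 hu0, ENNReal.toReal_zero]
    positivity
  have ha : 0 < a := hb0.trans_le hba
  -- the exponent of `measureReal_sum_lt_sum_le_exp` is minimised at `t = log (a / b)`
  calc μ.real {ω | ∑ i ∈ s, X i ω < ∑ i ∈ u, X i ω}
      ≤ _ := measureReal_sum_lt_sum_le_exp hX h01 hindep hsu (log_nonneg ((one_le_div hb0).2 hba))
    _ = exp (-(a - b) ^ 2) := by
      rw [hs, hu, exp_neg, exp_log (div_pos ha hb0), inv_div]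
      congr 1
      field_simp
      ring

end IndependentZeroOne

theorem stmt_9_general
    {Ω : Type*} [MeasurableSpace Ω] (μ : Measure Ω) [IsProbabilityMeasure μ]
    (m : ℕ)
    (θ₀ : ℝ) (hθ₀ : 0 < θ₀)
    (θ : ℕ → ℝ) (hθ : ∀ i, i < 2 * m → 0 < θ i)
    (p q : ℝ) (hq : 0 ≤ q) (hqp : q < p)
    (hnorm1 : ∑ i ∈ range m, θ i = m)
    (hnorm2 : ∑ i ∈ Ico m (2 * m), θ i = m)
    (X : ℕ → Ω → ℝ) (hXmeas : ∀ i, Measurable (X i))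
    (hX01 : ∀ i ω, X i ω = 0 ∨ X i ω = 1)
    (hindep : iIndepFun X μ)
    (hlaw1 : ∀ i, i < m → μ {ω | X i ω = 1} = ENNReal.ofReal (θ₀ * θ i * p))
    (hlaw2 : ∀ i, m ≤ i → i < 2 * m → μ {ω | X i ω = 1} = ENNReal.ofReal (θ₀ * θ i * q)) :
    (μ {ω | ∑ i ∈ range m, X i ω < ∑ i ∈ Ico m (2 * m), X i ω}).toReal
      ≤ Real.exp (-(θ₀ * m * (Real.sqrt p - Real.sqrt q) ^ 2)) := by
  have hsum : ∀ (I : Finset ℕ) (c : ℝ), 0 ≤ c → ∑ i ∈ I, θ i = m → (∀ i ∈ I, i < 2 * m ∧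
      μ {ω | X i ω = 1} = ENNReal.ofReal (θ₀ * θ i * c)) →
      ∑ i ∈ I, μ.real {ω | X i ω = 1} = (√(θ₀ * m) * √c) ^ 2 := by
    intro I c hc hθI hI
    rw [mul_pow, sq_sqrt (by positivity), sq_sqrt hc, ← hθI, mul_sum, sum_mul]
    refine sum_congr rfl fun i hi ↦ ?_
    have := hθ i (hI i hi).1
    rw [measureReal_def, (hI i hi).2, ENNReal.toReal_ofReal (by positivity), mul_assoc]
  have hsum_p := hsum (range m) p (hq.trans hqp.le) hnorm1 fun i hi ↦
    ⟨by have := mem_range.1 hi; omega, hlaw1 i (mem_range.1 hi)⟩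
  have hsum_q := hsum (Ico m (2 * m)) q hq hnorm2 fun i hi ↦
    ⟨(mem_Ico.1 hi).2, hlaw2 i (mem_Ico.1 hi).1 (mem_Ico.1 hi).2⟩
  have hdisj : Disjoint (range m) (Ico m (2 * m)) := by
    rw [range_eq_Ico]
    exact Ico_disjoint_Ico_consecutive 0 m (2 * m)
  refine (measureReal_sum_lt_sum_le_exp_neg_sq hXmeas hX01 hindep hdisj (by positivity)
    (mul_le_mul_of_nonneg_left (sqrt_le_sqrt hqp.le) (sqrt_nonneg _)) hsum_p hsum_q).trans_eq ?_
  rw [← mul_sub, mul_pow, sq_sqrt (by positivity)]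

theorem stmt_9
    {Ω : Type*} [MeasurableSpace Ω] (μ : Measure Ω) [IsProbabilityMeasure μ]
    (m : ℕ) (hm : 0 < m)
    (θ₀ : ℝ) (hθ₀ : 0 < θ₀)
    (θ : ℕ → ℝ) (hθ : ∀ i, i < 2 * m → 0 < θ i)
    (p q : ℝ) (hq : 0 ≤ q) (hqp : q < p) (hp : p ≤ 1)
    (hbound : ∀ i, i < 2 * m → θ₀ * θ i * p ≤ 1)
    (hnorm1 : ∑ i ∈ range m, θ i = m)
    (hnorm2 : ∑ i ∈ Ico m (2 * m), θ i = m)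
    (X : ℕ → Ω → ℝ) (hXmeas : ∀ i, Measurable (X i))
    (hX01 : ∀ i ω, X i ω = 0 ∨ X i ω = 1)
    (hindep : iIndepFun X μ)
    (hlaw1 : ∀ i, i < m → μ {ω | X i ω = 1} = ENNReal.ofReal (θ₀ * θ i * p))
    (hlaw2 : ∀ i, m ≤ i → i < 2 * m → μ {ω | X i ω = 1} = ENNReal.ofReal (θ₀ * θ i * q)) :
    (μ {ω | ∑ i ∈ range m, X i ω < ∑ i ∈ Ico m (2 * m), X i ω}).toReal
      ≤ Real.exp (-(θ₀ * m * (Real.sqrt p - Real.sqrt q) ^ 2)) :=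
  stmt_9_general μ m θ₀ hθ₀ θ hθ p q hq hqp hnorm1 hnorm2 X hXmeas hX01 hindep hlaw1 hlaw2
end

section
/- Let P, P', A be real n×n matrices where P' has rank at most k, and let P̂ be any minimizer of ‖A − X‖_F² over matrices X of rank at most k. Then ‖P̂ − P‖_F² ≤ 3‖P' − P‖_F² + 8·sup{ |⟨K, A − P⟩|² : ‖K‖_F = 1, rank(K) ≤ 2k }. -/
open Matrix in
lemma myrank_add_le {n : ℕ} (X Y : Matrix (Fin n) (Fin n) ℝ) :
    (X + Y).rank ≤ X.rank + Y.rank := by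
  rw [Matrix.rank, Matrix.rank, Matrix.rank]
  have h : LinearMap.range (X + Y).mulVecLin ≤
      LinearMap.range X.mulVecLin ⊔ LinearMap.range Y.mulVecLin := by
    rintro v ⟨w, rfl⟩
    rw [Matrix.mulVecLin_add]
    exact Submodule.add_mem_sup ⟨w, rfl⟩ ⟨w, rfl⟩
  exact le_trans (Submodule.finrank_mono h)
    (Submodule.finrank_add_le_finrank_add_finrank _ _)

open Matrix in
lemma myrank_smul_le {n : ℕ} (c : ℝ) (X : Matrix (Fin n) (Fin n) ℝ) :
    (c • X).rank ≤ X.rank := by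
  have : c • X = (c • (1 : Matrix (Fin n) (Fin n) ℝ)) * X := by
    rw [Matrix.smul_mul, Matrix.one_mul]
  rw [this]
  exact Matrix.rank_mul_le_right _ _

set_option maxHeartbeats 1000000 in
theorem stmt_15 {n : ℕ} (k : ℕ) (P P' A Phat : Matrix (Fin n) (Fin n) ℝ)
    (hP' : P'.rank ≤ k) (hPhat : Phat.rank ≤ k)
    (hmin : ∀ X : Matrix (Fin n) (Fin n) ℝ, X.rank ≤ k →
      ∑ i, ∑ j, (A i j - Phat i j) ^ 2 ≤ ∑ i, ∑ j, (A i j - X i j) ^ 2) :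
    ∑ i, ∑ j, (Phat i j - P i j) ^ 2
      ≤ 3 * (∑ i, ∑ j, (P' i j - P i j) ^ 2)
        + 8 * sSup {x : ℝ | ∃ K : Matrix (Fin n) (Fin n) ℝ,
            (∑ i, ∑ j, (K i j) ^ 2 = 1) ∧ K.rank ≤ 2 * k ∧
            x = (∑ i, ∑ j, K i j * (A i j - P i j)) ^ 2} := by
  classical
  set Sset := {x : ℝ | ∃ K : Matrix (Fin n) (Fin n) ℝ,
      (∑ i, ∑ j, (K i j) ^ 2 = 1) ∧ K.rank ≤ 2 * k ∧
      x = (∑ i, ∑ j, K i j * (A i j - P i j)) ^ 2} with hSset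
  set S := sSup Sset with hS
  -- the set is bounded above
  have hbdd : BddAbove Sset := by
    refine ⟨∑ i, ∑ j, (A i j - P i j)^2, ?_⟩
    rintro x ⟨K, hK1, -, rfl⟩
    have h1 : ∀ f : Fin n → Fin n → ℝ, (∑ i, ∑ j, f i j)
        = ∑ p : Fin n × Fin n, f p.1 p.2 :=
      fun f => (Fintype.sum_prod_type (fun p : Fin n × Fin n => f p.1 p.2)).symm
    rw [h1, h1]
    calc (∑ p : Fin n × Fin n, K p.1 p.2 * (A p.1 p.2 - P p.1 p.2)) ^ 2
        ≤ (∑ p : Fin n × Fin n, (K p.1 p.2)^2) *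
          (∑ p : Fin n × Fin n, (A p.1 p.2 - P p.1 p.2)^2) :=
          Finset.sum_mul_sq_le_sq_mul_sq _ _ _
      _ = _ := by rw [← h1 (fun i j => (K i j)^2), hK1, one_mul]
  have hS0 : 0 ≤ S := by
    apply Real.sSup_nonneg
    rintro x ⟨K, -, -, rfl⟩
    positivity
  -- abbreviations
  set d2 : ℝ := ∑ i, ∑ j, (Phat i j - P' i j)^2 with hd2def
  set e2 : ℝ := ∑ i, ∑ j, (P' i j - P i j)^2 with he2def
  set t : ℝ := ∑ i, ∑ j, (Phat i j - P' i j) * (A i j - P i j) with htdef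
  set c : ℝ := ∑ i, ∑ j, (Phat i j - P' i j) * (P' i j - P i j) with hcdef
  have hd2 : 0 ≤ d2 := hd2def ▸
    Finset.sum_nonneg fun i _ => Finset.sum_nonneg fun j _ => sq_nonneg _
  have he2 : 0 ≤ e2 := he2def ▸
    Finset.sum_nonneg fun i _ => Finset.sum_nonneg fun j _ => sq_nonneg _
  -- key inequality from minimality
  have h1 : d2 ≤ 2*t - 2*c := by
    have hm := hmin P' hP'
    have expand : ∑ i, ∑ j, (A i j - Phat i j)^2
        = (∑ i, ∑ j, (A i j - P' i j)^2) - 2*t + 2*c + d2 := by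
      rw [htdef, hcdef, hd2def, Finset.mul_sum, Finset.mul_sum,
        ← Finset.sum_sub_distrib, ← Finset.sum_add_distrib, ← Finset.sum_add_distrib]
      refine Finset.sum_congr rfl fun i _ => ?_
      rw [Finset.mul_sum, Finset.mul_sum,
        ← Finset.sum_sub_distrib, ← Finset.sum_add_distrib, ← Finset.sum_add_distrib]
      refine Finset.sum_congr rfl fun j _ => ?_
      ring
    rw [expand] at hm
    linarith
  -- Cauchy-Schwarz for c
  have h2 : c^2 ≤ d2 * e2 := by
    have h1' : ∀ f : Fin n → Fin n → ℝ, (∑ i, ∑ j, f i j)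
        = ∑ p : Fin n × Fin n, f p.1 p.2 :=
      fun f => (Fintype.sum_prod_type (fun p : Fin n × Fin n => f p.1 p.2)).symm
    rw [hcdef, hd2def, he2def, h1', h1', h1']
    exact Finset.sum_mul_sq_le_sq_mul_sq _ _ _
  -- sup bound for t
  have h3 : t^2 ≤ d2 * S := by
    rcases eq_or_lt_of_le hd2 with h0 | h0
    · -- d2 = 0 : all entries of Phat - P' vanish, so t = 0
      have hz : ∀ i j, Phat i j - P' i j = 0 := by
        intro i j
        have hinner : ∑ j, (Phat i j - P' i j)^2 = 0 := by
          have := (Finset.sum_eq_zero_iff_of_nonneg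
            (fun i _ => Finset.sum_nonneg fun j _ => sq_nonneg (Phat i j - P' i j))).1 h0.symm
          exact this i (Finset.mem_univ i)
        have := (Finset.sum_eq_zero_iff_of_nonneg
          (fun j _ => sq_nonneg (Phat i j - P' i j))).1 hinner j (Finset.mem_univ j)
        exact pow_eq_zero_iff two_ne_zero |>.mp this
      have ht0 : t = 0 := by
        rw [htdef]
        refine Finset.sum_eq_zero fun i _ => Finset.sum_eq_zero fun j _ => ?_
        rw [hz i j, zero_mul]
      rw [ht0, ← h0]
      simp
    · -- d2 > 0 : use the normalized matrix K
      set r : ℝ := Real.sqrt d2 with hr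
      have hr0 : 0 < r := Real.sqrt_pos.2 h0
      have hrq : r^2 = d2 := Real.sq_sqrt hd2
      set K : Matrix (Fin n) (Fin n) ℝ := r⁻¹ • (Phat - P') with hK
      have hKmem : (∑ i, ∑ j, K i j * (A i j - P i j))^2 ∈ Sset := by
        refine ⟨K, ?_, ?_, rfl⟩
        · have : ∑ i, ∑ j, (K i j)^2 = r⁻¹^2 * d2 := by
            rw [hd2def, Finset.mul_sum]
            refine Finset.sum_congr rfl fun i _ => ?_
            rw [Finset.mul_sum]
            refine Finset.sum_congr rfl fun j _ => ?_
            simp [hK, Matrix.sub_apply]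
            ring
          rw [this, ← hrq]
          field_simp
        · calc K.rank ≤ (Phat - P').rank := myrank_smul_le _ _
            _ = (Phat + (-1 : ℝ) • P').rank := by rw [sub_eq_add_neg, neg_one_smul]
            _ ≤ Phat.rank + ((-1 : ℝ) • P').rank := myrank_add_le _ _
            _ ≤ Phat.rank + P'.rank := by
                have := myrank_smul_le (-1 : ℝ) P'
                omega
            _ ≤ 2 * k := by omega
      have hval : ∑ i, ∑ j, K i j * (A i j - P i j) = r⁻¹ * t := by
        rw [htdef, Finset.mul_sum]
        refine Finset.sum_congr rfl fun i _ => ?_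
        rw [Finset.mul_sum]
        refine Finset.sum_congr rfl fun j _ => ?_
        simp [hK, Matrix.sub_apply]
        ring
      have hle : (r⁻¹ * t)^2 ≤ S := by
        rw [← hval]
        exact le_csSup hbdd hKmem
      have : (r⁻¹ * t)^2 = t^2 / d2 := by
        rw [mul_pow, ← hrq]
        field_simp
      rw [this] at hle
      calc t^2 = (t^2 / d2) * d2 := by field_simp
        _ ≤ S * d2 := mul_le_mul_of_nonneg_right hle hd2
        _ = d2 * S := mul_comm _ _
  -- final expansion
  have expand2 : ∑ i, ∑ j, (Phat i j - P i j)^2 = d2 + 2*c + e2 := by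
    rw [hcdef, hd2def, he2def, Finset.mul_sum,
      ← Finset.sum_add_distrib, ← Finset.sum_add_distrib]
    refine Finset.sum_congr rfl fun i _ => ?_
    rw [Finset.mul_sum, ← Finset.sum_add_distrib, ← Finset.sum_add_distrib]
    refine Finset.sum_congr rfl fun j _ => ?_
    ring
  rw [expand2]
  -- arithmetic finish
  set d := Real.sqrt d2 with hd
  set e := Real.sqrt e2 with he
  set s := Real.sqrt S with hs
  have hd0 : 0 ≤ d := Real.sqrt_nonneg _
  have he0 : 0 ≤ e := Real.sqrt_nonneg _
  have hs0 : 0 ≤ s := Real.sqrt_nonneg _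
  have hdq : d^2 = d2 := Real.sq_sqrt hd2
  have heq : e^2 = e2 := Real.sq_sqrt he2
  have hsq : s^2 = S := Real.sq_sqrt hS0
  have hc2 : -c ≤ d*e := by nlinarith [mul_nonneg hd0 he0]
  have ht2 : t ≤ d*s := by nlinarith [mul_nonneg hd0 hs0]
  have hdle : d ≤ 2*s + 2*e := by nlinarith
  have key : d*s ≤ (2*s+2*e)*s := mul_le_mul_of_nonneg_right hdle hs0
  nlinarith [sq_nonneg (e - s)]
end

section
/- Let m, m₁ be positive integers, θ₀, θ₁, …, θ_{m+m₁} > 0, 0 < q < p < 1 with all θ₀θᵢp ≤ 1, and suppose (1/m)Σ_{i=1}^m θᵢ ∈ [1−δ, 1+δ] and (1/m₁)Σ_{i=m+1}^{m+m₁} θᵢ ∈ [1−δ, 1+δ]. Then for every t ∈ (0,1): (1/2)(Σ_{i=1}^m J_t(θ₀θᵢq, θ₀θᵢp) + Σ_{i=m+1}^{m+m₁} J_t(θ₀θᵢp, θ₀θᵢq)) ≤ θ₀·m·(p + q − p^{1−t}q^t − q^{1−t}p^t) + θ₀·(δ·m + δ·m₁ + |m₁ − m|)·2(√p − √q)²,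 where J_t(a,b) = 2(ta + (1−t)b − a^t b^{1−t}). -/
private lemma J_homog (t c a b : ℝ) (hc : 0 < c) (ha : 0 < a) (hb : 0 < b) :
    J t (c * a) (c * b) = c * J t a b := by
  unfold J
  rw [Real.mul_rpow hc.le ha.le, Real.mul_rpow hc.le hb.le]
  have h : c ^ t * c ^ (1 - t) = c := by
    rw [← Real.rpow_add hc]; ring_nf; exact Real.rpow_one c
  linear_combination (-2 * (a ^ t * b ^ (1 - t))) * h

private lemma J_nonneg (t a b : ℝ) (ha : 0 < a) (hb : 0 < b) (ht0 : 0 < t) (ht1 : t < 1) :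
    0 ≤ J t a b := by
  have := Real.geom_mean_le_arith_mean2_weighted ht0.le (by linarith : (0:ℝ) ≤ 1 - t)
    ha.le hb.le (by ring)
  unfold J; linarith

private lemma J_le (t a b : ℝ) (ha : 0 < a) (hb : 0 < b) (ht0 : 0 < t) (ht1 : t < 1) :
    J t a b ≤ 2 * (Real.sqrt a - Real.sqrt b) ^ 2 := by
  have h1 : a ^ (1 - t) * b ^ t ≤ (1 - t) * a + t * b :=
    Real.geom_mean_le_arith_mean2_weighted (by linarith) ht0.le ha.le hb.le (by ring)
  set x := a ^ (1 - t) * b ^ t with hx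
  set y := a ^ t * b ^ (1 - t) with hy
  have hx0 : 0 ≤ x := mul_nonneg (Real.rpow_nonneg ha.le _) (Real.rpow_nonneg hb.le _)
  have hy0 : 0 ≤ y := mul_nonneg (Real.rpow_nonneg ha.le _) (Real.rpow_nonneg hb.le _)
  have hxy : x * y = a * b := by
    rw [hx, hy]
    rw [show a ^ (1-t) * b ^ t * (a ^ t * b ^ (1-t)) = (a ^ (1-t) * a ^ t) * (b ^ t * b ^ (1-t)) by ring,
      ← Real.rpow_add ha, ← Real.rpow_add hb]
    norm_num
  have h2 : 2 * Real.sqrt (a * b) ≤ x + y := by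
    have e : Real.sqrt x * Real.sqrt y = Real.sqrt (a * b) := by
      rw [← Real.sqrt_mul hx0, hxy]
    nlinarith [sq_nonneg (Real.sqrt x - Real.sqrt y), Real.sq_sqrt hx0, Real.sq_sqrt hy0]
  have hs : Real.sqrt a * Real.sqrt b = Real.sqrt (a * b) := (Real.sqrt_mul ha.le b).symm
  have hsa := Real.sq_sqrt ha.le
  have hsb := Real.sq_sqrt hb.le
  unfold J
  nlinarith [h1, h2]

private lemma key_arith (θ₀ A B K S₁ S₂ M M₁ δ : ℝ)
    (hθ₀ : 0 ≤ θ₀) (hA0 : 0 ≤ A) (hB0 : 0 ≤ B) (hAK : A ≤ K) (hBK : B ≤ K)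
    (hδ : 0 ≤ δ) (hM : 0 ≤ M) (hM₁ : 0 ≤ M₁)
    (hS1l : (1 - δ) * M ≤ S₁) (hS1r : S₁ ≤ (1 + δ) * M)
    (hS2l : (1 - δ) * M₁ ≤ S₂) (hS2r : S₂ ≤ (1 + δ) * M₁) :
    (1/2) * (θ₀ * S₁ * A + θ₀ * S₂ * B)
      ≤ θ₀ * M * ((A + B) / 2) + θ₀ * (δ * M + δ * M₁ + |M₁ - M|) * K := by
  have hK0 : 0 ≤ K := hA0.trans hAK
  have hδM : 0 ≤ δ * M := mul_nonneg hδ hM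
  have hδM₁ : 0 ≤ δ * M₁ := mul_nonneg hδ hM₁
  have e1 : A * (S₁ - M) ≤ K * (δ * M) := by
    nlinarith [mul_le_mul_of_nonneg_left hS1r hA0, mul_le_mul_of_nonneg_right hAK hδM]
  have e2 : B * (S₂ - M₁) ≤ K * (δ * M₁) := by
    nlinarith [mul_le_mul_of_nonneg_left hS2r hB0, mul_le_mul_of_nonneg_right hBK hδM₁]
  have e3 : B * (M₁ - M) ≤ K * |M₁ - M| := by
    rcases le_or_gt 0 (M₁ - M) with h | h
    · rw [abs_of_nonneg h]
      exact mul_le_mul_of_nonneg_right hBK h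
    · have : B * (M₁ - M) ≤ 0 := mul_nonpos_of_nonneg_of_nonpos hB0 h.le
      exact this.trans (mul_nonneg hK0 (abs_nonneg _))
  have f1 := mul_le_mul_of_nonneg_left e1 hθ₀
  have f2 := mul_le_mul_of_nonneg_left e2 hθ₀
  have f3 := mul_le_mul_of_nonneg_left e3 hθ₀
  have f4 : 0 ≤ θ₀ * (K * (δ * M + δ * M₁ + |M₁ - M|)) :=
    mul_nonneg hθ₀ (mul_nonneg hK0 (by positivity))
  nlinarith [f1, f2, f3, f4]

theorem stmt_18 (m m₁ : ℕ) (hm : 0 < m) (hm₁ : 0 < m₁)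
    (θ₀ : ℝ) (hθ₀ : 0 < θ₀) (θ : ℕ → ℝ) (hθ : ∀ i, 0 < θ i)
    (p q δ : ℝ) (hq : 0 < q) (hqp : q < p) (hp : p < 1) (hδ : 0 ≤ δ)
    (hbound : ∀ i, θ₀ * θ i * p ≤ 1)
    (hnorm1 : (1 / m) * ∑ i ∈ Finset.range m, θ i ∈ Set.Icc (1 - δ) (1 + δ))
    (hnorm2 : (1 / m₁) * ∑ i ∈ Finset.Ico m (m + m₁), θ i ∈ Set.Icc (1 - δ) (1 + δ))
    (t : ℝ) (ht : t ∈ Set.Ioo (0:ℝ) 1) :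
    (1/2) * (∑ i ∈ Finset.range m, J t (θ₀ * θ i * q) (θ₀ * θ i * p)
        + ∑ i ∈ Finset.Ico m (m + m₁), J t (θ₀ * θ i * p) (θ₀ * θ i * q))
      ≤ θ₀ * m * (p + q - p ^ (1 - t) * q ^ t - q ^ (1 - t) * p ^ t)
        + θ₀ * (δ * m + δ * m₁ + |(m₁ : ℝ) - m|)
            * (2 * (Real.sqrt p - Real.sqrt q) ^ 2) := by
  obtain ⟨ht0, ht1⟩ := ht
  have hp0 : 0 < p := lt_trans hq hqp
  have hA0 : 0 ≤ J t q p := J_nonneg t q p hq hp0 ht0 ht1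
  have hB0 : 0 ≤ J t p q := J_nonneg t p q hp0 hq ht0 ht1
  have hAK : J t q p ≤ 2 * (Real.sqrt p - Real.sqrt q) ^ 2 := by
    have h := J_le t q p hq hp0 ht0 ht1
    have h2 : 2 * (Real.sqrt q - Real.sqrt p) ^ 2 = 2 * (Real.sqrt p - Real.sqrt q) ^ 2 := by
      ring
    linarith
  have hBK : J t p q ≤ 2 * (Real.sqrt p - Real.sqrt q) ^ 2 := J_le t p q hp0 hq ht0 ht1
  have hsum1 : ∑ i ∈ Finset.range m, J t (θ₀ * θ i * q) (θ₀ * θ i * p)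
      = θ₀ * (∑ i ∈ Finset.range m, θ i) * J t q p := by
    rw [mul_assoc, Finset.sum_mul, Finset.mul_sum]
    refine Finset.sum_congr rfl fun i _ => ?_
    rw [J_homog t (θ₀ * θ i) q p (mul_pos hθ₀ (hθ i)) hq hp0]
    ring
  have hsum2 : ∑ i ∈ Finset.Ico m (m + m₁), J t (θ₀ * θ i * p) (θ₀ * θ i * q)
      = θ₀ * (∑ i ∈ Finset.Ico m (m + m₁), θ i) * J t p q := by
    rw [mul_assoc, Finset.sum_mul, Finset.mul_sum]
    refine Finset.sum_congr rfl fun i _ => ?_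
    rw [J_homog t (θ₀ * θ i) p q (mul_pos hθ₀ (hθ i)) hp0 hq]
    ring
  have hm0 : (0:ℝ) < m := Nat.cast_pos.mpr hm
  have hm₁0 : (0:ℝ) < m₁ := Nat.cast_pos.mpr hm₁
  obtain ⟨h1l, h1r⟩ := hnorm1
  obtain ⟨h2l, h2r⟩ := hnorm2
  have hS1l : (1 - δ) * m ≤ ∑ i ∈ Finset.range m, θ i := by
    rw [div_mul_eq_mul_div, le_div_iff₀ hm0] at h1l; linarith
  have hS1r : (∑ i ∈ Finset.range m, θ i) ≤ (1 + δ) * m := by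
    rw [div_mul_eq_mul_div, div_le_iff₀ hm0] at h1r; linarith
  have hS2l : (1 - δ) * m₁ ≤ ∑ i ∈ Finset.Ico m (m + m₁), θ i := by
    rw [div_mul_eq_mul_div, le_div_iff₀ hm₁0] at h2l; linarith
  have hS2r : (∑ i ∈ Finset.Ico m (m + m₁), θ i) ≤ (1 + δ) * m₁ := by
    rw [div_mul_eq_mul_div, div_le_iff₀ hm₁0] at h2r; linarith
  rw [hsum1, hsum2]
  have hhalf : p + q - p ^ (1 - t) * q ^ t - q ^ (1 - t) * p ^ t
      = (J t q p + J t p q) / 2 := by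
    unfold J; ring
  rw [hhalf]
  exact key_arith θ₀ (J t q p) (J t p q) (2 * (Real.sqrt p - Real.sqrt q) ^ 2)
    (∑ i ∈ Finset.range m, θ i) (∑ i ∈ Finset.Ico m (m + m₁), θ i) m m₁ δ
    hθ₀.le hA0 hB0 hAK hBK hδ hm0.le hm₁0.le hS1l hS1r hS2l hS2r
end
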